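/- arXiv:1905.10213 — 2 statements merged into one kernel-verified Lean document; each statement's English description precedes it below -/
import Mathlib

section
/- For every n ∈ ℕ and every y ∈ ⋃_{m=1}^∞ m·K_n there is a polynomial P(t) = Σ_{i=1}^{pos(Δ_{n+1},0)} c_i·t^i with Σ_{i=1}^{pos(Δ_{n+1},0)} |c_i| ≤ D_n for which |||P(T)y − e_0|||_{N_n} ≤ 3. -/
/-!
Replacing the coefficients `c i` by `c i / m` reduces the claim for `y = m • z` to the assumed
estimate for `z ∈ K_n`. In that estimate the first term equals `2`, since `e_{pos(a_n,0)} = e_{a_n,0}`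
has norm `A_{N_n,a_n}`. For the second term one computes the orbit of `e_0`: on each block
`pos(Δ_k,0) ≤ j < pos(a_k,0)` the operator is a weighted shift, and the excursion along row `0`
from `a_k` to `Δ_{k+1}` (which meets no `b_m`) cancels the return to `e_{pos(Δ_k,0)}`, so
`T^j e_0 = α_j e_j` throughout the block. For `pos(Δ_{n+1},0) ≤ j ≤ 2(pos(Δ_{n+1},0) - 1)` the index
`j` is below `b_{n+1}`, whence `α_j ≤ 1/A_{N_{n+1},a_{n+1}}`, the column of `e_j` is at most
`b_{n+1}`, and `|||T^j e_0|||_{N_n} ≤ A_{N_n,b_{n+1}}/A_{N_{n+1},a_{n+1}} ≤ 1/D_n`.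
-/

open scoped Classical in
/-- The function `Next` from Definition 4.1, defined from the sequence `(b_n)`. -/
noncomputable def nextFn (b : ℕ → ℕ) : ℕ × ℕ → ℕ × ℕ :=
  fun p =>
    if (∃ n : ℕ, 1 ≤ n ∧ p.1 = b n ∧ Even p.2 ∧ p.2 < 2 * n) ∨
       (∃ n : ℕ, 1 ≤ n ∧ p.1 = 2 * b n + 1 ∧ Odd p.2 ∧ 0 < p.2 ∧ p.2 ≤ 2 * n) ∨
       (p.1 = 0 ∧ Odd p.2) then
      (p.1, p.2 + 1)
    else if (∃ n : ℕ, 1 ≤ n ∧ p.1 = b n + 1 ∧ Odd p.2 ∧ p.2 < 2 * n) ∨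
        (∃ n : ℕ, 1 ≤ n ∧ p.1 = 2 * b n ∧ Even p.2 ∧ 0 < p.2 ∧ p.2 ≤ 2 * n) then
      (p.1, p.2 - 1)
    else if Even p.2 then (p.1 + 1, p.2)
    else (p.1 - 1, p.2)

/-- `enum k = Next^k (0, 0)`, the `k`-th element of the ordering of `ℕ × ℕ` defined by `Next`. -/
noncomputable def enum (b : ℕ → ℕ) (k : ℕ) : ℕ × ℕ := (nextFn b)^[k] (0, 0)

/-- The basis vector `e_k = e_{n,m}` where `pos (n, m) = k`, in `s₀,₀^ℕ = ℕ × ℕ →₀ ℝ`. -/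
noncomputable def eVec (b : ℕ → ℕ) (k : ℕ) : ℕ × ℕ →₀ ℝ := Finsupp.single (enum b k) 1

/-- `|(x_{i,j})_i|_N = Σ_i |x_{i,j}| A_{N,i}`, the `N`-th seminorm of the `j`-th column. -/
noncomputable def colNorm (A : ℕ → ℕ → ℝ) (N : ℕ) (x : ℕ × ℕ → ℝ) (j : ℕ) : ℝ :=
  ∑' i : ℕ, |x (i, j)| * A N i

/-- `‖x‖_N = Σ_{j ≤ N} |(x_{i,j})_i|_N`, the seminorms of `s^ℕ`. -/
noncomputable def normK (A : ℕ → ℕ → ℝ) (N : ℕ) (x : ℕ × ℕ → ℝ) : ℝ :=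
  ∑ j ∈ Finset.range (N + 1), colNorm A N x j

/-- `|||x|||_N = Σ_j |(x_{i,j})_i|_N`, the norms of `s₀^ℕ`. -/
noncomputable def norm3 (A : ℕ → ℕ → ℝ) (N : ℕ) (x : ℕ × ℕ → ℝ) : ℝ :=
  ∑' j : ℕ, colNorm A N x j

theorem nextFn_fst_le (b : ℕ → ℕ) (p : ℕ × ℕ) : (nextFn b p).1 ≤ p.1 + 1 := by
  unfold nextFn
  split_ifs <;> simp only <;> omega

theorem enum_fst_le (b : ℕ → ℕ) (k : ℕ) : (enum b k).1 ≤ k := by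
  induction k with
  | zero => simp [enum]
  | succ k ih =>
    rw [enum, Function.iterate_succ_apply']
    exact (nextFn_fst_le b _).trans (by rw [enum] at ih; omega)

theorem nextFn_row_zero (b : ℕ → ℕ) {i : ℕ} (hi : ∀ m, 1 ≤ m → b m ≠ i) :
    nextFn b (i, 0) = (i + 1, 0) := by
  unfold nextFn
  rw [if_neg, if_neg, if_pos Even.zero]
  · rintro (⟨n, -, -, h, -⟩ | ⟨n, -, -, -, h, -⟩)
    · exact Nat.not_odd_zero h
    · exact lt_irrefl 0 h
  · rintro (⟨n, hn, h, -⟩ | ⟨n, -, -, h, -⟩ | ⟨-, h⟩)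
    · exact hi n hn h.symm
    · exact Nat.not_odd_zero h
    · exact Nat.not_odd_zero h

theorem enum_add_of_row_zero (b : ℕ → ℕ) {k i : ℕ} (hk : enum b k = (i, 0)) {r : ℕ}
    (hr : ∀ t < r, ∀ m, 1 ≤ m → b m ≠ i + t) : enum b (k + r) = (i + r, 0) := by
  induction r with
  | zero => exact hk
  | succ r ih =>
    rw [enum, ← add_assoc, Function.iterate_succ_apply', ← enum, ih fun t ht => hr t (by omega),
      nextFn_row_zero b (hr r (by omega))]
    rfl

theorem enum_pos {b : ℕ → ℕ} {pos : ℕ × ℕ → ℕ} (hpos : ∀ p k, pos p = k ↔ enum b k = p)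
    (p : ℕ × ℕ) : enum b (pos p) = p :=
  (hpos p _).mp rfl

theorem le_pos_row_zero {b : ℕ → ℕ} {pos : ℕ × ℕ → ℕ} (hpos : ∀ p k, pos p = k ↔ enum b k = p)
    (i : ℕ) : i ≤ pos (i, 0) := by
  simpa only [enum_pos hpos] using enum_fst_le b (pos (i, 0))

theorem pos_add_of_row_zero {b : ℕ → ℕ} {pos : ℕ × ℕ → ℕ}
    (hpos : ∀ p k, pos p = k ↔ enum b k = p) {i r : ℕ}
    (hr : ∀ t < r, ∀ m, 1 ≤ m → b m ≠ i + t) : pos (i + r, 0) = pos (i, 0) + r :=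
  (hpos _ _).mpr (enum_add_of_row_zero b (enum_pos hpos _) hr)

theorem norm3_single (A : ℕ → ℕ → ℝ) (N : ℕ) (q : ℕ × ℕ) (c : ℝ) :
    norm3 A N ⇑(Finsupp.single q c) = |c| * A N q.1 := by
  unfold norm3 colNorm
  rw [tsum_eq_single q.2, tsum_eq_single q.1]
  · simp
  · intro i hi
    simp [Prod.ext_iff, Ne.symm hi]
  · intro j hj
    simp [Prod.ext_iff, Ne.symm hj]

theorem norm3_smul_eVec (A : ℕ → ℕ → ℝ) (b : ℕ → ℕ) (N k : ℕ) (c : ℝ) :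
    norm3 A N ⇑(c • eVec b k) = |c| * A N (enum b k).1 := by
  rw [eVec, Finsupp.smul_single, smul_eq_mul, mul_one, norm3_single]

section Orbit

variable {𝕜 M : Type*} [Field 𝕜] [AddCommGroup M] [Module 𝕜 M] (T : Module.End 𝕜 M) (e : ℕ → M)

theorem pow_apply_of_weighted_shift {α : ℕ → 𝕜} {x : M} {p q : ℕ}
    (hα : ∀ j, p ≤ j → j + 1 < q → α j ≠ 0)
    (hT : ∀ j, p ≤ j → j + 1 < q → T (e j) = (α (j + 1) / α j) • e (j + 1))
    (hx : (T ^ p) x = α p • e p) {j : ℕ} (hpj : p ≤ j) (hjq : j < q) :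
    (T ^ j) x = α j • e j := by
  induction j, hpj using Nat.le_induction with
  | base => exact hx
  | succ j hpj ih =>
    rw [pow_succ', Module.End.mul_apply, ih (by omega), map_smul, hT j hpj hjq, smul_smul,
      mul_div_cancel₀ _ (hα j hpj hjq)]

theorem pow_apply_of_shift {k l : ℕ} (hT : ∀ j, k ≤ j → j + 1 < l → T (e j) = e (j + 1))
    {t : ℕ} (ht : k + t < l) : (T ^ t) (e k) = e (k + t) := by
  induction t with
  | zero => rfl
  | succ t ih =>
    rw [pow_succ', Module.End.mul_apply, ih (by omega), hT _ (by omega) (by omega)]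
    rfl

theorem pow_apply_of_blocks {P Q : ℕ → ℕ} {α c : ℕ → 𝕜}
    (hP0 : P 0 = 1) (hPQ : ∀ n, P n < Q n) (hP : ∀ n, P (n + 1) = Q n + P n)
    (hα : ∀ n j, P n ≤ j → j < Q n → α j ≠ 0) (hc : ∀ n, c n ≠ 0)
    (hT0 : T (e 0) = α 1 • e 1)
    (hTa : ∀ n j, P n ≤ j → j + 1 < Q n → T (e j) = (α (j + 1) / α j) • e (j + 1))
    (hTb : ∀ n, T (e (Q n - 1)) = (α (Q n - 1))⁻¹ • ((c n)⁻¹ • e (Q n) + e 0))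
    (hTc : ∀ n j, Q n ≤ j → j + 1 < P (n + 1) → T (e j) = e (j + 1))
    (hTd : ∀ n, T (e (P (n + 1) - 1)) =
      (c n * α (P (n + 1))) • e (P (n + 1)) - (c n * α (P n)) • e (P n))
    {n j : ℕ} (hPj : P n ≤ j) (hjQ : j < Q n) : (T ^ j) (e 0) = α j • e j := by
  have hP1 : ∀ n, 1 ≤ P n := fun n => by cases n <;> grind
  suffices hstart : ∀ n, (T ^ P n) (e 0) = α (P n) • e (P n) from
    pow_apply_of_weighted_shift T e (fun j h1 h2 => hα n j h1 (by omega)) (hTa n) (hstart n)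
      hPj hjQ
  intro n
  induction n with
  | zero => rw [hP0, pow_one]; exact hT0
  | succ n ih =>
    have hblock : ∀ j, P n ≤ j → j < Q n → (T ^ j) (e 0) = α j • e j := fun j =>
      pow_apply_of_weighted_shift T e (fun j h1 h2 => hα n j h1 (by omega)) (hTa n) ih
    have hQn : (T ^ Q n) (e 0) = (c n)⁻¹ • e (Q n) + e 0 := by
      obtain ⟨q, hq⟩ : ∃ q, Q n = q + 1 := ⟨Q n - 1, by grind⟩
      have hq' : q = Q n - 1 := by omega
      rw [hq, pow_succ', Module.End.mul_apply, ← hq, hq', hblock _ (by grind) (by omega),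
        map_smul, hTb, smul_smul, mul_inv_cancel₀ (hα n _ (by grind) (by omega)), one_smul]
    calc (T ^ P (n + 1)) (e 0) = T ((T ^ (P n - 1)) ((T ^ Q n) (e 0))) := by
          rw [← Module.End.mul_apply (T ^ (P n - 1)), ← pow_add, ← Module.End.mul_apply,
            ← pow_succ', hP n]
          have := hP1 n
          congr 2
          omega
      _ = T ((c n)⁻¹ • e (P (n + 1) - 1) + (T ^ (P n - 1)) (e 0)) := by
          rw [hQn, map_add, map_smul, pow_apply_of_shift T e (hTc n) (by grind)]
          congr 4
          grind
      _ = α (P (n + 1)) • e (P (n + 1)) := by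
          rw [map_add, map_smul, hTd, ← Module.End.mul_apply, ← pow_succ',
            Nat.sub_add_cancel (hP1 n), ih, smul_sub, smul_smul, smul_smul,
            inv_mul_cancel_left₀ (hc n), inv_mul_cancel_left₀ (hc n), sub_add_cancel]

theorem sum_smul_pow_apply_smul {ι : Type*} (s : Finset ι) (k : ι → ℕ) (c : ι → 𝕜) {m : 𝕜}
    (hm : m ≠ 0) (z : M) :
    ∑ i ∈ s, (c i / m) • (T ^ k i) (m • z) = ∑ i ∈ s, c i • (T ^ k i) z := by
  refine Finset.sum_congr rfl fun i _ => ?_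
  rw [map_smul, smul_smul, div_mul_cancel₀ _ hm]

end Orbit

section Sequences

variable {b a s Δ : ℕ → ℕ} {pos : ℕ × ℕ → ℕ}

theorem b_ne_of_mem_gap (hbmono : ∀ n, 1 ≤ n → b n < b (n + 1))
    (hord : ∀ n, 1 ≤ n → Δ n < b n ∧ 2 * b n < s n ∧ s n < a n ∧ a n < Δ (n + 1))
    {n i : ℕ} (hai : a n ≤ i) (hiΔ : i < Δ (n + 1)) {m : ℕ} (hm : 1 ≤ m) : b m ≠ i := by
  have hb_mono : ∀ ⦃k l⦄, 1 ≤ k → k ≤ l → b k ≤ b l :=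
    Nat.rel_of_forall_rel_succ_of_le_of_le (· ≤ ·) fun k hk => (hbmono k hk).le
  rcases lt_or_ge n m with hnm | hmn
  · have := hb_mono (by omega : 1 ≤ n + 1) hnm
    have := hord (n + 1) (by omega)
    omega
  · have := hb_mono hm hmn
    have := hord n (by omega)
    omega

theorem pos_delta_zero (hpos : ∀ p k, pos p = k ↔ enum b k = p)
    (hord : ∀ n, 1 ≤ n → Δ n < b n ∧ 2 * b n < s n ∧ s n < a n ∧ a n < Δ (n + 1))
    (hΔ0 : Δ 0 = 1) : pos (Δ 0, 0) = 1 := by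
  have hb : ∀ t < 1, ∀ m, 1 ≤ m → b m ≠ 0 + t := fun t ht m hm => by
    have := (hord m hm).1
    omega
  rw [hΔ0, ← zero_add 1, pos_add_of_row_zero hpos hb, (hpos (0, 0) 0).mpr rfl]

theorem pos_delta_succ (hpos : ∀ p k, pos p = k ↔ enum b k = p)
    (hbmono : ∀ n, 1 ≤ n → b n < b (n + 1))
    (hord : ∀ n, 1 ≤ n → Δ n < b n ∧ 2 * b n < s n ∧ s n < a n ∧ a n < Δ (n + 1))
    (hΔ : ∀ n, Δ (n + 1) = a n + pos (Δ n, 0)) (n : ℕ) :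
    pos (Δ (n + 1), 0) = pos (a n, 0) + pos (Δ n, 0) := by
  rw [hΔ]
  exact pos_add_of_row_zero hpos fun t ht m hm =>
    b_ne_of_mem_gap hbmono hord (n := n) (by omega) (by rw [hΔ]; omega) hm

theorem pos_delta_lt_pos_a (hpos : ∀ p k, pos p = k ↔ enum b k = p) (hΔ0 : Δ 0 = 1)
    (hord0 : Δ 0 < a 0)
    (hord : ∀ n, 1 ≤ n → Δ n < b n ∧ 2 * b n < s n ∧ s n < a n ∧ a n < Δ (n + 1))
    (hbΔ : ∀ n, 1 ≤ n → 2 * pos (Δ n, 0) ≤ b n) (n : ℕ) : pos (Δ n, 0) < pos (a n, 0) := by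
  have := le_pos_row_zero hpos (a n)
  cases n with
  | zero =>
    rw [pos_delta_zero hpos hord hΔ0]
    omega
  | succ n =>
    have := hbΔ (n + 1) (by omega)
    have := hord (n + 1) (by omega)
    omega

theorem pos_delta_lt_pos_s (hpos : ∀ p k, pos p = k ↔ enum b k = p)
    (hord : ∀ n, 1 ≤ n → Δ n < b n ∧ 2 * b n < s n ∧ s n < a n ∧ a n < Δ (n + 1))
    (hbΔ : ∀ n, 1 ≤ n → 2 * pos (Δ n, 0) ≤ b n) {n : ℕ} (hn : 1 ≤ n) :
    pos (Δ n, 0) < pos (s n, 0) := by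
  have := hbΔ n hn
  have := hord n hn
  have := le_pos_row_zero hpos (s n)
  omega

end Sequences

theorem alpha_pos {P S Q : ℕ → ℕ} {c D α : ℕ → ℝ} (hc : ∀ n, 0 < c n) (hD : ∀ n, 0 < D n)
    (hPS : ∀ n, 1 ≤ n → P n < S n)
    (hα0 : ∀ j, P 0 ≤ j → j < Q 0 → α j = (2 : ℝ) ^ (j - P 0) / c 0)
    (hα1 : ∀ n j, 1 ≤ n → P n ≤ j → j < S n →
      α j = (1 / c n) * ((2 * D (n - 1)) ^ (j - P n))⁻¹)
    (hα2 : ∀ n j, 1 ≤ n → S n ≤ j → j < Q n → α j = α (S n - 1) * 2 ^ (j - S n))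
    {n j : ℕ} (hPj : P n ≤ j) (hjQ : j < Q n) : 0 < α j := by
  have hα1_pos : ∀ n j, 1 ≤ n → P n ≤ j → j < S n → 0 < α j := fun n j hn h1 h2 => by
    rw [hα1 n j hn h1 h2]
    have := hc n
    have := hD (n - 1)
    positivity
  rcases Nat.eq_zero_or_pos n with rfl | hn
  · rw [hα0 j hPj hjQ]
    have := hc 0
    positivity
  · rcases lt_or_ge j (S n) with hjS | hjS
    · exact hα1_pos n j hn hPj hjS
    · have := hPS n hn
      rw [hα2 n j hn hjS hjQ]
      have := hα1_pos n (S n - 1) hn (by omega) (by omega)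
      positivity

theorem norm3_orbit_le_inv {A : ℕ → ℕ → ℝ} {b a s Δ Nn : ℕ → ℕ} {pos : ℕ × ℕ → ℕ}
    {D α : ℕ → ℝ} {T : Module.End ℝ (ℕ × ℕ →₀ ℝ)} (hpos : ∀ p k, pos p = k ↔ enum b k = p)
    (hA1 : ∀ N j, 1 ≤ A N j) (hA3m : ∀ N, Monotone fun j => A N j) (hD : ∀ n, 1 ≤ D n)
    (hord : ∀ n, 1 ≤ n → Δ n < b n ∧ 2 * b n < s n ∧ s n < a n ∧ a n < Δ (n + 1))
    (hbΔ : ∀ n, 1 ≤ n → 2 * pos (Δ n, 0) ≤ b n)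
    (hc4 : ∀ n, 1 ≤ n → D (n - 1) * A (Nn (n - 1)) (b n) ≤ A (Nn n) (a n))
    (hα1 : ∀ n j, 1 ≤ n → pos (Δ n, 0) ≤ j → j < pos (s n, 0) →
      α j = (1 / A (Nn n) (a n)) * ((2 * D (n - 1)) ^ (j - pos (Δ n, 0)))⁻¹)
    {n : ℕ} (horbit : ∀ j, pos (Δ (n + 1), 0) ≤ j → j < pos (a (n + 1), 0) →
      (T ^ j) (eVec b 0) = α j • eVec b j)
    {j : ℕ} (hj1 : pos (Δ (n + 1), 0) ≤ j) (hj2 : j ≤ 2 * (pos (Δ (n + 1), 0) - 1)) :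
    norm3 A (Nn n) ⇑((T ^ j) (eVec b 0)) ≤ 1 / D n := by
  obtain ⟨-, hbs, hsa, -⟩ := hord (n + 1) (by omega)
  have := hbΔ (n + 1) (by omega)
  have hjb : j ≤ b (n + 1) := by omega
  have hjs : j < pos (s (n + 1), 0) := by have := le_pos_row_zero hpos (s (n + 1)); omega
  have hja : j < pos (a (n + 1), 0) := by have := le_pos_row_zero hpos (a (n + 1)); omega
  have hC : 0 < A (Nn (n + 1)) (a (n + 1)) := by linarith [hA1 (Nn (n + 1)) (a (n + 1))]
  have hDn : 0 < D n := by linarith [hD n]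
  have hscale : 1 ≤ (2 * D n) ^ (j - pos (Δ (n + 1), 0)) := one_le_pow₀ (by linarith [hD n])
  have hcol : A (Nn n) (enum b j).1 ≤ A (Nn n) (b (n + 1)) :=
    hA3m _ ((enum_fst_le b j).trans hjb)
  have hc4n := hc4 (n + 1) (by omega)
  simp only [Nat.add_sub_cancel] at hc4n
  rw [horbit j hj1 hja, norm3_smul_eVec, hα1 (n + 1) j (by omega) hj1 hjs, Nat.add_sub_cancel,
    abs_of_pos (by positivity)]
  calc 1 / A (Nn (n + 1)) (a (n + 1)) * ((2 * D n) ^ (j - pos (Δ (n + 1), 0)))⁻¹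
        * A (Nn n) (enum b j).1
      ≤ 1 / A (Nn (n + 1)) (a (n + 1)) * 1 * A (Nn n) (b (n + 1)) := by
        gcongr
        · linarith [hA1 (Nn n) (enum b j).1]
        · exact inv_le_one_of_one_le₀ hscale
    _ ≤ 1 / D n := by
        rw [mul_one, div_mul_eq_mul_div, one_mul, div_le_div_iff₀ hC hDn]
        linarith

theorem heads_estimate_union_general
    (A : ℕ → ℕ → ℝ) (b : ℕ → ℕ) (pos : ℕ × ℕ → ℕ)
    (Nn a s : ℕ → ℕ) (D : ℕ → ℝ) (Δ : ℕ → ℕ) (α : ℕ → ℝ)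
    (T : (ℕ × ℕ →₀ ℝ) →ₗ[ℝ] (ℕ × ℕ →₀ ℝ))
    (τ : ℕ → (ℕ × ℕ →₀ ℝ) →ₗ[ℝ] (ℕ × ℕ →₀ ℝ))
    (hA1 : ∀ N j, 1 ≤ A N j)
    (hA3m : ∀ N, Monotone fun j => A N j)
    (hbmono : ∀ n, 1 ≤ n → b n < b (n + 1))
    (hpos : ∀ p k, pos p = k ↔ (nextFn b)^[k] (0, 0) = p)
    (hD : ∀ n, 1 ≤ D n)
    (hΔ0 : Δ 0 = 1)
    (hΔ : ∀ n, Δ (n + 1) = a n + pos (Δ n, 0))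
    (hord0 : Δ 0 < a 0 ∧ a 0 < Δ 1)
    (hord : ∀ n, 1 ≤ n → Δ n < b n ∧ 2 * b n < s n ∧ s n < a n ∧ a n < Δ (n + 1))
    (hbΔ : ∀ n, 1 ≤ n → 2 * pos (Δ n, 0) ≤ b n)
    (hc4 : ∀ n, 1 ≤ n → D (n - 1) * A (Nn (n - 1)) (b n) ≤ A (Nn n) (a n))
    (hα0 : ∀ j, pos (Δ 0, 0) ≤ j → j < pos (a 0, 0) →
      α j = (2 : ℝ) ^ (j - pos (Δ 0, 0)) / A (Nn 0) (a 0))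
    (hα1 : ∀ n j, 1 ≤ n → pos (Δ n, 0) ≤ j → j < pos (s n, 0) →
      α j = (1 / A (Nn n) (a n)) * ((2 * D (n - 1)) ^ (j - pos (Δ n, 0)))⁻¹)
    (hα2 : ∀ n j, 1 ≤ n → pos (s n, 0) ≤ j → j < pos (a n, 0) →
      α j = α (pos (s n, 0) - 1) * 2 ^ (j - pos (s n, 0)))
    (hT0 : T (eVec b 0) = α 1 • eVec b 1)
    (hTa : ∀ n j, pos (Δ n, 0) ≤ j → j + 1 < pos (a n, 0) →
      T (eVec b j) = (α (j + 1) / α j) • eVec b (j + 1))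
    (hTb : ∀ n : ℕ, T (eVec b (pos (a n, 0) - 1)) =
      (α (pos (a n, 0) - 1))⁻¹ • ((A (Nn n) (a n))⁻¹ • eVec b (pos (a n, 0)) + eVec b 0))
    (hTc : ∀ n j, pos (a n, 0) ≤ j → j + 1 < pos (Δ (n + 1), 0) →
      T (eVec b j) = eVec b (j + 1))
    (hTd : ∀ n : ℕ, T (eVec b (pos (Δ (n + 1), 0) - 1)) =
      (A (Nn n) (a n) * α (pos (Δ (n + 1), 0))) • eVec b (pos (Δ (n + 1), 0)) -
        (A (Nn n) (a n) * α (pos (Δ n, 0))) • eVec b (pos (Δ n, 0)))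
    (hDn : ∀ n : ℕ, ∀ y : ℕ × ℕ →₀ ℝ,
      y ∈ Submodule.span ℝ (eVec b '' {j | j < pos (Δ (n + 1), 0)}) →
      norm3 A 0 ⇑y ≤ 1 → 1 / 2 ≤ norm3 A 0 ⇑(τ n y) →
      ∃ c : ℕ → ℝ, (∑ i ∈ Finset.Icc 1 (pos (Δ (n + 1), 0)), |c i|) ≤ D n ∧
        norm3 A (Nn n)
            ⇑((∑ i ∈ Finset.Icc 1 (pos (Δ (n + 1), 0)), c i • (T ^ i) y) - eVec b 0) ≤
          2 / A (Nn n) (a n) * norm3 A (Nn n) ⇑(eVec b (pos (a n, 0))) +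
            D n * sSup ((fun j => norm3 A (Nn n) ⇑((T ^ j) (eVec b 0))) ''
              Set.Icc (pos (Δ (n + 1), 0)) (2 * (pos (Δ (n + 1), 0) - 1))))
    :
    ∀ n : ℕ, ∀ y : ℕ × ℕ →₀ ℝ,
      (∃ (m : ℕ) (z : ℕ × ℕ →₀ ℝ), 1 ≤ m ∧
        z ∈ Submodule.span ℝ (eVec b '' {j | j < pos (Δ (n + 1), 0)}) ∧
        norm3 A 0 ⇑z ≤ 1 ∧ 1 / 2 ≤ norm3 A 0 ⇑(τ n z) ∧ y = (m : ℝ) • z) →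
      ∃ c : ℕ → ℝ, (∑ i ∈ Finset.Icc 1 (pos (Δ (n + 1), 0)), |c i|) ≤ D n ∧
        norm3 A (Nn n)
          ⇑((∑ i ∈ Finset.Icc 1 (pos (Δ (n + 1), 0)), c i • (T ^ i) y) - eVec b 0) ≤ 3 := by
  have hA : ∀ N j, 0 < A N j := fun N j => one_pos.trans_le (hA1 N j)
  have hα : ∀ n j, pos (Δ n, 0) ≤ j → j < pos (a n, 0) → 0 < α j := fun n j =>
    alpha_pos (S := fun n => pos (s n, 0)) (fun n => hA _ _) (fun n => one_pos.trans_le (hD n))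
      (fun n => pos_delta_lt_pos_s hpos hord hbΔ) hα0 hα1 hα2
  have horbit : ∀ n j, pos (Δ n, 0) ≤ j → j < pos (a n, 0) → (T ^ j) (eVec b 0) = α j • eVec b j :=
    fun n j => pow_apply_of_blocks T (eVec b) (pos_delta_zero hpos hord hΔ0)
      (pos_delta_lt_pos_a hpos hΔ0 hord0.1 hord hbΔ) (pos_delta_succ hpos hbmono hord hΔ)
      (fun n j h1 h2 => (hα n j h1 h2).ne') (fun n => (hA _ _).ne') hT0 hTa hTb hTc hTd
  rintro n y ⟨m, z, hm, hz, hz1, hz2, rfl⟩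
  obtain ⟨c, hc, hest⟩ := hDn n z hz hz1 hz2
  have hhead : norm3 A (Nn n) ⇑(eVec b (pos (a n, 0))) = A (Nn n) (a n) := by
    simpa [enum_pos hpos] using norm3_smul_eVec A b (Nn n) (pos (a n, 0)) 1
  have htail : D n * sSup ((fun j => norm3 A (Nn n) ⇑((T ^ j) (eVec b 0))) ''
      Set.Icc (pos (Δ (n + 1), 0)) (2 * (pos (Δ (n + 1), 0) - 1))) ≤ 1 := by
    have hDpos : 0 < D n := one_pos.trans_le (hD n)
    rw [← le_div_iff₀' hDpos]
    refine Real.sSup_le ?_ (by positivity)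
    rintro _ ⟨j, ⟨hj1, hj2⟩, rfl⟩
    exact norm3_orbit_le_inv hpos hA1 hA3m hD hord hbΔ hc4 hα1 (horbit (n + 1)) hj1 hj2
  have hm0 : (m : ℝ) ≠ 0 := by positivity
  refine ⟨fun i => c i / m, ?_, ?_⟩
  · refine le_trans (Finset.sum_le_sum fun i _ => ?_) hc
    rw [abs_div, Nat.abs_cast]
    exact div_le_self (abs_nonneg _) (by exact_mod_cast hm)
  · rw [sum_smul_pow_apply_smul T _ _ _ hm0]
    calc _ ≤ _ := hest
      _ ≤ 3 := by
        rw [hhead, div_mul_cancel₀ _ (hA _ _).ne']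
        linarith

/-- For every `n` and every `y ∈ ⋃_{m ≥ 1} m K_n` there is a polynomial `P(t) = Σ_{i=1}^{pos(Δ_{n+1},0)} c_i tⁱ` with `Σ |c_i| ≤ D_n` and `|||P(T) y - e₀|||_{N_n} ≤ 3`. -/
theorem heads_estimate_union
    (A : ℕ → ℕ → ℝ) (b : ℕ → ℕ) (pos : ℕ × ℕ → ℕ)
    (Nn a s : ℕ → ℕ) (D : ℕ → ℝ) (Δ : ℕ → ℕ) (α : ℕ → ℝ)
    (T : (ℕ × ℕ →₀ ℝ) →ₗ[ℝ] (ℕ × ℕ →₀ ℝ))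
    (τ : ℕ → (ℕ × ℕ →₀ ℝ) →ₗ[ℝ] (ℕ × ℕ →₀ ℝ))
    (hA1 : ∀ N j, 1 ≤ A N j)
    (hA2m : ∀ j, Monotone fun N => A N j)
    (hA2u : ∀ j, ¬ BddAbove (Set.range fun N => A N j))
    (hA3m : ∀ N, Monotone fun j => A N j)
    (hA3u : ∀ N, ¬ BddAbove (Set.range fun j => A N j))
    (hA4 : ∀ N j, A N (j + 1) ≤ 2 * A N j)
    (hA5 : ∀ N, Filter.Tendsto (fun j => A N j / A (N + 1) j) Filter.atTop (nhds 0))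
    (hA6 : ∀ N, Filter.Tendsto (fun j => (2 : ℝ) ^ j / A N j) Filter.atTop Filter.atTop)
    (hbpos : ∀ n, 1 ≤ n → 0 < b n)
    (hbmono : ∀ n, 1 ≤ n → b n < b (n + 1))
    (hbgap : ∀ n, 1 ≤ n → 2 * b n + 1 < b (n + 1))
    (hpos : ∀ p k, pos p = k ↔ (nextFn b)^[k] (0, 0) = p)
    (hNle : ∀ n, Nn n ≤ n)
    (hNinf : ∀ N m, ∃ n, m ≤ n ∧ Nn n = N)
    (hD : ∀ n, 1 ≤ D n)
    (hΔ0 : Δ 0 = 1)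
    (hΔ : ∀ n, Δ (n + 1) = a n + pos (Δ n, 0))
    (hord0 : Δ 0 < a 0 ∧ a 0 < Δ 1)
    (hord : ∀ n, 1 ≤ n → Δ n < b n ∧ 2 * b n < s n ∧ s n < a n ∧ a n < Δ (n + 1))
    (hbΔ : ∀ n, 1 ≤ n → 2 * pos (Δ n, 0) ≤ b n)
    (hc2bn : ∀ n k, 1 ≤ n → b n ≤ k →
      (4 : ℝ) ^ pos (Δ n, 0) * A (Nn (n - 1) + 1) k ≤ A (Nn (n - 1) + 2) k / D (n - 1))
    (hc1 : ∀ n, 1 ≤ n →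
      A (Nn n) (a n) * (2 * D (n - 1)) ^ (pos (s n, 0) - pos (Δ n, 0) - 1) ≤
        (2 : ℝ) ^ (pos (a n, 0) - pos (s n, 0) - 1))
    (hc2 : ∀ n, 1 ≤ n → A (Nn (n - 1)) (a (n - 1)) ≤ A (Nn n) (a n))
    (hc4 : ∀ n, 1 ≤ n → D (n - 1) * A (Nn (n - 1)) (b n) ≤ A (Nn n) (a n))
    (hc3 : ∀ n, A (Nn n) (a n) * 4 ^ pos (Δ n, 0) * A 0 0 ≤ A (Nn n + 1) (a n))
    (hc1' : A (Nn 0) (a 0) ≤ (2 : ℝ) ^ (pos (a 0, 0) - pos (Δ 0, 0) - 1))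
    (hα0 : ∀ j, pos (Δ 0, 0) ≤ j → j < pos (a 0, 0) →
      α j = (2 : ℝ) ^ (j - pos (Δ 0, 0)) / A (Nn 0) (a 0))
    (hα1 : ∀ n j, 1 ≤ n → pos (Δ n, 0) ≤ j → j < pos (s n, 0) →
      α j = (1 / A (Nn n) (a n)) * ((2 * D (n - 1)) ^ (j - pos (Δ n, 0)))⁻¹)
    (hα2 : ∀ n j, 1 ≤ n → pos (s n, 0) ≤ j → j < pos (a n, 0) →
      α j = α (pos (s n, 0) - 1) * 2 ^ (j - pos (s n, 0)))
    (hT0 : T (eVec b 0) = α 1 • eVec b 1)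
    (hTa : ∀ n j, pos (Δ n, 0) ≤ j → j + 1 < pos (a n, 0) →
      T (eVec b j) = (α (j + 1) / α j) • eVec b (j + 1))
    (hTb : ∀ n : ℕ, T (eVec b (pos (a n, 0) - 1)) =
      (α (pos (a n, 0) - 1))⁻¹ • ((A (Nn n) (a n))⁻¹ • eVec b (pos (a n, 0)) + eVec b 0))
    (hTc : ∀ n j, pos (a n, 0) ≤ j → j + 1 < pos (Δ (n + 1), 0) →
      T (eVec b j) = eVec b (j + 1))
    (hTd : ∀ n : ℕ, T (eVec b (pos (Δ (n + 1), 0) - 1)) =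
      (A (Nn n) (a n) * α (pos (Δ (n + 1), 0))) • eVec b (pos (Δ (n + 1), 0)) -
        (A (Nn n) (a n) * α (pos (Δ n, 0))) • eVec b (pos (Δ n, 0)))
    (hτ : ∀ (n : ℕ) (y : ℕ → ℝ),
      τ n (∑ j ∈ Finset.range (pos (Δ (n + 1), 0)), y j • (T ^ j) (eVec b 0)) =
        ∑ j ∈ Finset.range (pos (a n, 0)), y j • (T ^ j) (eVec b 0))
    (hDn : ∀ n : ℕ, ∀ y : ℕ × ℕ →₀ ℝ,
      y ∈ Submodule.span ℝ (eVec b '' {j | j < pos (Δ (n + 1), 0)}) →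
      norm3 A 0 ⇑y ≤ 1 → 1 / 2 ≤ norm3 A 0 ⇑(τ n y) →
      ∃ c : ℕ → ℝ, (∑ i ∈ Finset.Icc 1 (pos (Δ (n + 1), 0)), |c i|) ≤ D n ∧
        norm3 A (Nn n)
            ⇑((∑ i ∈ Finset.Icc 1 (pos (Δ (n + 1), 0)), c i • (T ^ i) y) - eVec b 0) ≤
          2 / A (Nn n) (a n) * norm3 A (Nn n) ⇑(eVec b (pos (a n, 0))) +
            D n * sSup ((fun j => norm3 A (Nn n) ⇑((T ^ j) (eVec b 0))) ''
              Set.Icc (pos (Δ (n + 1), 0)) (2 * (pos (Δ (n + 1), 0) - 1))))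
    :
    ∀ n : ℕ, ∀ y : ℕ × ℕ →₀ ℝ,
      (∃ (m : ℕ) (z : ℕ × ℕ →₀ ℝ), 1 ≤ m ∧
        z ∈ Submodule.span ℝ (eVec b '' {j | j < pos (Δ (n + 1), 0)}) ∧
        norm3 A 0 ⇑z ≤ 1 ∧ 1 / 2 ≤ norm3 A 0 ⇑(τ n z) ∧ y = (m : ℝ) • z) →
      ∃ c : ℕ → ℝ, (∑ i ∈ Finset.Icc 1 (pos (Δ (n + 1), 0)), |c i|) ≤ D n ∧
        norm3 A (Nn n)
          ⇑((∑ i ∈ Finset.Icc 1 (pos (Δ (n + 1), 0)), c i • (T ^ i) y) - eVec b 0) ≤ 3 :=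
  heads_estimate_union_general A b pos Nn a s D Δ α T τ hA1 hA3m hbmono hpos hD hΔ0 hΔ hord0 hord
    hbΔ hc4 hα0 hα1 hα2 hT0 hTa hTb hTc hTd hDn
end

section
/- For every n ∈ ℕ, if j ≥ pos(Δ_{n+1},0) and 1 ≤ i ≤ pos(Δ_{n+1},0), then for every N ∈ ℕ: ‖e_{i+j}‖_N ≤ 2^i·‖e_j‖_{N+1}. -/
/-!
Write `enum b k = (x_k, y_k)`. One step of `Next` raises the column by at most one, so
`x_{i+j} ≤ x_j + i`; it lowers the row by at most one, and only at the "down-turns" on the walls of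
the snails around the blocks `[b m, 2 b m + 1]`. Past `P = pos (Δ_{n+1}, 0)` two down-turns are
more than `P` steps apart: from a down-turn of a snail `m ≤ n` the walk spirals down to
`(b m + 1, 0)` and moves on along row `0` to `(Δ_{n+1}, 0)`, so it occurs before time `P`, while
a down-turn of a snail `m > n` is preceded by `b m - 1 ≥ 2 P - 1` steps without down-turns. Hence
`y_j ≤ y_{i+j} + 1` for `i ≤ P`, and the estimate follows from `A_{N,x+i} ≤ 2^i A_{N,x}` and the
monotonicity of `A` in `N`.
-/

namespace Snail

section Orbit

variable {α : Type*} {f : α → α} {g : α → ℕ}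

lemma iterate_eq_of_forall_lt {g : ℕ → α} {K : ℕ} (h : ∀ t < K, f (g t) = g (t + 1)) :
    ∀ t ≤ K, f^[t] (g 0) = g t := by
  intro t ht
  induction t with
  | zero => rfl
  | succ t ih => rw [Function.iterate_succ_apply', ih (by omega), h t (by omega)]

lemma le_iterate_add_of_le_add_one (h : ∀ x, g (f x) ≤ g x + 1) (k : ℕ) (x : α) :
    g (f^[k] x) ≤ g x + k := by
  induction k with
  | zero => rfl
  | succ k ih => rw [Function.iterate_succ_apply']; have := h (f^[k] x); omega

lemma le_iterate_of_forall_not {D : α → Prop} (hD : ∀ x, ¬ D x → g x ≤ g (f x)) :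
    ∀ (K : ℕ) (x : α), (∀ s < K, ¬ D (f^[s] x)) → g x ≤ g (f^[K] x) := by
  intro K
  induction K with
  | zero => intro x _; rfl
  | succ K ih =>
    intro x hx
    rw [Function.iterate_succ_apply]
    exact (hD x (hx 0 K.succ_pos)).trans (ih (f x) fun s hs => hx (s + 1) (by omega))

lemma le_iterate_add_one {D : α → Prop} (hD : ∀ x, ¬ D x → g x ≤ g (f x))
    (h : ∀ x, g x ≤ g (f x) + 1) :
    ∀ (K : ℕ) (x : α), (∀ s t, s < t → t < K → D (f^[t] x) → ¬ D (f^[s] x)) →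
      g x ≤ g (f^[K] x) + 1 := by
  intro K
  induction K with
  | zero => intro x _; exact Nat.le_succ _
  | succ K ih =>
    intro x hx
    rw [Function.iterate_succ_apply]
    by_cases hx₀ : D x
    · exact (h x).trans (Nat.add_le_add_right (le_iterate_of_forall_not hD K (f x)
        fun s hs hs' => hx 0 (s + 1) (by omega) (by omega) hs' hx₀) 1)
    · exact (hD x hx₀).trans
        (ih (f x) fun s t hst ht => hx (s + 1) (t + 1) (by omega) (by omega))

end Orbit

lemma colNorm_single (A : ℕ → ℕ → ℝ) (N : ℕ) (p : ℕ × ℕ) (j : ℕ) :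
    colNorm A N ⇑(Finsupp.single p (1 : ℝ)) j = if j = p.2 then A N p.1 else 0 := by
  unfold colNorm
  split_ifs with h
  · subst h
    rw [tsum_eq_single p.1 fun i hi => by simp [Prod.ext_iff, Ne.symm hi]]
    simp
  · simp [Prod.ext_iff, Ne.symm h]

lemma normK_single (A : ℕ → ℕ → ℝ) (N : ℕ) (p : ℕ × ℕ) :
    normK A N ⇑(Finsupp.single p (1 : ℝ)) = if p.2 ≤ N then A N p.1 else 0 := by
  simp [normK, colNorm_single]

lemma apply_add_le_two_pow_mul {f : ℕ → ℝ} (hf : ∀ j, f (j + 1) ≤ 2 * f j) (c k : ℕ) :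
    f (c + k) ≤ 2 ^ k * f c := by
  induction k with
  | zero => simp
  | succ k ih =>
    calc f (c + (k + 1)) ≤ 2 * f (c + k) := hf (c + k)
      _ ≤ 2 * (2 ^ k * f c) := by gcongr
      _ = 2 ^ (k + 1) * f c := by ring

lemma normK_single_le_two_pow_mul {A : ℕ → ℕ → ℝ} {N : ℕ} (hA₀ : ∀ j, 0 ≤ A (N + 1) j)
    (hAN : ∀ j, A N j ≤ A (N + 1) j) (hAj : Monotone (A N)) (hA₂ : ∀ j, A N (j + 1) ≤ 2 * A N j)
    {p q : ℕ × ℕ} {i : ℕ} (h₁ : q.1 ≤ p.1 + i) (h₂ : p.2 ≤ q.2 + 1) :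
    normK A N ⇑(Finsupp.single q 1) ≤ 2 ^ i * normK A (N + 1) ⇑(Finsupp.single p 1) := by
  rw [normK_single, normK_single]
  split_ifs with hq hp hp
  · calc A N q.1 ≤ A N (p.1 + i) := hAj h₁
      _ ≤ 2 ^ i * A N p.1 := apply_add_le_two_pow_mul hA₂ _ _
      _ ≤ 2 ^ i * A (N + 1) p.1 := by gcongr; exact hAN _
  · omega
  · exact mul_nonneg (by positivity) (hA₀ _)
  · simp

variable {b : ℕ → ℕ} {p : ℕ × ℕ}

/- The branches of `nextFn`, with parities written as `% 2` so that `omega` can use them.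
A down-turn "at `m`" lies on the wall of the snail around the block `[b m, 2 b m + 1]`. -/

def TurnsUp (b : ℕ → ℕ) (p : ℕ × ℕ) : Prop :=
  (∃ n, 1 ≤ n ∧ p.1 = b n ∧ p.2 % 2 = 0 ∧ p.2 < 2 * n) ∨
  (∃ n, 1 ≤ n ∧ p.1 = 2 * b n + 1 ∧ p.2 % 2 = 1 ∧ 0 < p.2 ∧ p.2 ≤ 2 * n) ∨
  (p.1 = 0 ∧ p.2 % 2 = 1)

def TurnsDownAt (b : ℕ → ℕ) (m : ℕ) (p : ℕ × ℕ) : Prop :=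
  (p.1 = b m + 1 ∧ p.2 % 2 = 1 ∧ p.2 < 2 * m) ∨
  (p.1 = 2 * b m ∧ p.2 % 2 = 0 ∧ 0 < p.2 ∧ p.2 ≤ 2 * m)

def TurnsDown (b : ℕ → ℕ) (p : ℕ × ℕ) : Prop := ∃ m, 1 ≤ m ∧ TurnsDownAt b m p

open scoped Classical in
lemma nextFn_eq_ite : nextFn b p =
    if TurnsUp b p then (p.1, p.2 + 1)
    else if TurnsDown b p then (p.1, p.2 - 1)
    else if p.2 % 2 = 0 then (p.1 + 1, p.2) else (p.1 - 1, p.2) := by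
  simp only [nextFn, TurnsUp, TurnsDown, TurnsDownAt, Nat.even_iff, Nat.odd_iff, and_or_left,
    exists_or]

lemma nextFn_of_turnsUp (h : TurnsUp b p) : nextFn b p = (p.1, p.2 + 1) := by
  rw [nextFn_eq_ite, if_pos h]

lemma nextFn_of_even {c y : ℕ} (hy : y % 2 = 0) (h₁ : ∀ k, 1 ≤ k → c = b k → 2 * k ≤ y)
    (h₂ : ∀ k, 1 ≤ k → c = 2 * b k → y = 0 ∨ 2 * k < y) : nextFn b (c, y) = (c + 1, y) := by
  rw [nextFn_eq_ite, if_neg, if_neg, if_pos hy]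
  · rintro ⟨k, hk, ⟨hc, _, _⟩ | ⟨hc, _, _, _⟩⟩
    · omega
    · have := h₂ k hk hc; omega
  · rintro (⟨k, hk, hc, _, _⟩ | ⟨k, -, -, _, -⟩ | ⟨-, _⟩)
    · have := h₁ k hk hc; omega
    all_goals omega

lemma nextFn_of_odd {c y : ℕ} (hy : y % 2 = 1) (hc : c ≠ 0)
    (h₁ : ∀ k, 1 ≤ k → c = 2 * b k + 1 → 2 * k < y) (h₂ : ∀ k, 1 ≤ k → c = b k + 1 → 2 * k ≤ y) :
    nextFn b (c, y) = (c - 1, y) := by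
  rw [nextFn_eq_ite, if_neg, if_neg, if_neg (by omega)]
  · rintro ⟨k, hk, ⟨hc', _, _⟩ | ⟨hc', _, _, _⟩⟩
    · have := h₂ k hk hc'; omega
    · omega
  · rintro (⟨k, -, -, _, -⟩ | ⟨k, hk, hc', _, _, _⟩ | ⟨hc', _⟩)
    · omega
    · have := h₁ k hk hc'; omega
    · exact hc hc'

lemma fst_nextFn_le (b : ℕ → ℕ) (p : ℕ × ℕ) : (nextFn b p).1 ≤ p.1 + 1 := by
  rw [nextFn_eq_ite]; split_ifs <;> dsimp only <;> omega

lemma snd_le_snd_nextFn_add_one (b : ℕ → ℕ) (p : ℕ × ℕ) : p.2 ≤ (nextFn b p).2 + 1 := by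
  rw [nextFn_eq_ite]; split_ifs <;> dsimp only <;> omega

lemma snd_le_snd_nextFn (h : ¬ TurnsDown b p) : p.2 ≤ (nextFn b p).2 := by
  rw [nextFn_eq_ite, if_neg h]; split_ifs <;> dsimp only <;> omega

lemma iterate_nextFn_of_even {c₀ c₁ y : ℕ} (hy : y % 2 = 0)
    (hfree : ∀ c, c₀ ≤ c → c < c₁ →
      (∀ k, 1 ≤ k → c = b k → 2 * k ≤ y) ∧ (∀ k, 1 ≤ k → c = 2 * b k → y = 0 ∨ 2 * k < y))
    {t : ℕ} (ht : c₀ + t ≤ c₁) : (nextFn b)^[t] (c₀, y) = (c₀ + t, y) :=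
  iterate_eq_of_forall_lt (g := fun t => (c₀ + t, y)) (K := c₁ - c₀)
    (fun u hu => nextFn_of_even hy (hfree _ le_self_add (by omega)).1
      (hfree _ le_self_add (by omega)).2) t (by omega)

lemma iterate_nextFn_of_odd {c₀ c₁ y : ℕ} (hy : y % 2 = 1)
    (hfree : ∀ c, c₀ < c → c ≤ c₁ →
      (∀ k, 1 ≤ k → c = 2 * b k + 1 → 2 * k < y) ∧ (∀ k, 1 ≤ k → c = b k + 1 → 2 * k ≤ y))
    {t : ℕ} (ht : c₀ + t ≤ c₁) : (nextFn b)^[t] (c₁, y) = (c₁ - t, y) :=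
  iterate_eq_of_forall_lt (g := fun t => (c₁ - t, y)) (K := c₁ - c₀)
    (fun u hu => by
      rw [nextFn_of_odd hy (by omega) (hfree _ (by omega) (by omega)).1
        (hfree _ (by omega) (by omega)).2]
      rfl) t (by omega)

def Reaches (b : ℕ → ℕ) (p q : ℕ × ℕ) : Prop := ∃ k, (nextFn b)^[k] p = q

lemma Reaches.refl (b : ℕ → ℕ) (p : ℕ × ℕ) : Reaches b p p := ⟨0, rfl⟩

lemma Reaches.of_nextFn {q : ℕ × ℕ} (h : nextFn b p = q) : Reaches b p q := ⟨1, h⟩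

lemma Reaches.trans {q r : ℕ × ℕ} (h₁ : Reaches b p q) (h₂ : Reaches b q r) :
    Reaches b p r := by
  obtain ⟨k₁, rfl⟩ := h₁
  obtain ⟨k₂, rfl⟩ := h₂
  exact ⟨k₂ + k₁, Function.iterate_add_apply _ _ _ _⟩

instance : Trans (Reaches b) (Reaches b) (Reaches b) := ⟨Reaches.trans⟩

lemma reaches_of_even {c₀ c₁ y : ℕ} (hy : y % 2 = 0)
    (hfree : ∀ c, c₀ ≤ c → c < c₁ →
      (∀ k, 1 ≤ k → c = b k → 2 * k ≤ y) ∧ (∀ k, 1 ≤ k → c = 2 * b k → y = 0 ∨ 2 * k < y))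
    (h : c₀ ≤ c₁) : Reaches b (c₀, y) (c₁, y) :=
  ⟨c₁ - c₀, by
    rw [iterate_nextFn_of_even hy hfree (by omega : c₀ + (c₁ - c₀) ≤ c₁)]; congr 1; omega⟩

lemma reaches_of_odd {c₀ c₁ y : ℕ} (hy : y % 2 = 1)
    (hfree : ∀ c, c₀ < c → c ≤ c₁ →
      (∀ k, 1 ≤ k → c = 2 * b k + 1 → 2 * k < y) ∧ (∀ k, 1 ≤ k → c = b k + 1 → 2 * k ≤ y))
    (h : c₀ ≤ c₁) : Reaches b (c₁, y) (c₀, y) :=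
  ⟨c₁ - c₀, by
    rw [iterate_nextFn_of_odd hy hfree (by omega : c₀ + (c₁ - c₀) ≤ c₁)]; congr 1; omega⟩

structure IsSnailSeq (b : ℕ → ℕ) : Prop where
  pos : ∀ n, 1 ≤ n → 0 < b n
  gap : ∀ n, 1 ≤ n → 2 * b n + 1 < b (n + 1)

namespace IsSnailSeq

variable {m k : ℕ}

lemma apply_le_apply (hb : IsSnailSeq b) (hm : 1 ≤ m) (h : m ≤ k) : b m ≤ b k := by
  induction k, h using Nat.le_induction with
  | base => exact le_rfl
  | succ k hk ih => have := hb.gap k (hm.trans hk); omega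

lemma trichotomy (hb : IsSnailSeq b) (hk : 1 ≤ k) (hm : 1 ≤ m) :
    (k < m ∧ 2 * b k + 1 < b m) ∨ k = m ∨
      (m < k ∧ 2 * b m + 1 < b k ∧ b (m + 1) ≤ b k) := by
  rcases lt_trichotomy k m with h | h | h
  · have := hb.gap k hk
    have := hb.apply_le_apply (by omega : 1 ≤ k + 1) h
    exact Or.inl ⟨h, by omega⟩
  · exact Or.inr (Or.inl h)
  · have hle := hb.apply_le_apply (by omega : 1 ≤ m + 1) h
    have := hb.gap m hm
    exact Or.inr (Or.inr ⟨h, by omega, hle⟩)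

end IsSnailSeq

lemma nextFn_of_turnsDownAt (hb : IsSnailSeq b) {m : ℕ} (hm : 1 ≤ m) (h : TurnsDownAt b m p) :
    nextFn b p = (p.1, p.2 - 1) := by
  have := hb.pos m hm
  rw [nextFn_eq_ite, if_neg, if_pos ⟨m, hm, h⟩]
  unfold TurnsDownAt at h
  rintro (⟨k, hk, hc, _, _⟩ | ⟨k, hk, hc, _, _, _⟩ | ⟨hc, _⟩)
  all_goals try rcases hb.trichotomy hk hm with ⟨_, _⟩ | rfl | ⟨_, _, _⟩
  all_goals omega

section Runs

/- The straight runs of the walk near the snail `m`: "inner" between the columns `b m + 1` and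
`2 b m`, "outer" between `2 b m + 1` and `b (m + 1)`, "top" on the rows above `2 m`. -/

variable (hb : IsSnailSeq b) {m y t : ℕ} (hm : 1 ≤ m)
include hb hm

lemma iterate_nextFn_inner_odd (hy : y % 2 = 1) (ht : t < b m) :
    (nextFn b)^[t] (2 * b m, y) = (2 * b m - t, y) := by
  refine iterate_nextFn_of_odd (c₀ := b m + 1) hy
    (fun c _ _ => ⟨fun k hk _ => ?_, fun k hk _ => ?_⟩) (by omega) <;>
  rcases hb.trichotomy hk hm with ⟨_, _⟩ | rfl | ⟨_, _, _⟩ <;> omega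

lemma iterate_nextFn_inner_even (hy : y % 2 = 0) (ht : t < b m) :
    (nextFn b)^[t] (b m + 1, y) = (b m + 1 + t, y) := by
  refine iterate_nextFn_of_even (c₁ := 2 * b m) hy
    (fun c _ _ => ⟨fun k hk _ => ?_, fun k hk _ => ?_⟩) (by omega) <;>
  rcases hb.trichotomy hk hm with ⟨_, _⟩ | rfl | ⟨_, _, _⟩ <;> omega

lemma iterate_nextFn_top_even {c₀ : ℕ} (hy : y % 2 = 0) (hym : 2 * m ≤ y)
    (ht : c₀ + t ≤ 2 * b m) : (nextFn b)^[t] (c₀, y) = (c₀ + t, y) := by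
  refine iterate_nextFn_of_even hy (fun c _ _ => ⟨fun k hk _ => ?_, fun k hk _ => ?_⟩) ht <;>
  rcases hb.trichotomy hk hm with ⟨_, _⟩ | rfl | ⟨_, _, _⟩ <;> omega

lemma reaches_row_zero {c₀ c₁ : ℕ} (h₀ : b m < c₀) (h : c₀ ≤ c₁) (h₁ : c₁ ≤ b (m + 1)) :
    Reaches b (c₀, 0) (c₁, 0) := by
  refine reaches_of_even rfl (fun c _ _ => ⟨fun k hk _ => ?_, fun _ _ _ => Or.inl rfl⟩) h
  rcases hb.trichotomy hk hm with ⟨_, _⟩ | rfl | ⟨_, _, _⟩ <;> omega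

lemma reaches_outer_odd (hy : y % 2 = 1) : Reaches b (b (m + 1), y) (2 * b m + 1, y) := by
  refine reaches_of_odd hy (fun c _ _ => ⟨fun k hk _ => ?_, fun k hk _ => ?_⟩)
    (hb.gap m hm).le <;>
  rcases hb.trichotomy hk hm with ⟨_, _⟩ | rfl | ⟨_, _, _⟩ <;> omega

lemma reaches_outer_even (hy : y % 2 = 0) : Reaches b (2 * b m + 1, y) (b (m + 1), y) := by
  refine reaches_of_even hy (fun c _ _ => ⟨fun k hk _ => ?_, fun k hk _ => ?_⟩)
    (hb.gap m hm).le <;>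
  rcases hb.trichotomy hk hm with ⟨_, _⟩ | rfl | ⟨_, _, _⟩ <;> omega

lemma reaches_top_odd (hy : y % 2 = 1) (hym : 2 * m < y) : Reaches b (b (m + 1), y) (0, y) := by
  refine reaches_of_odd hy (fun c _ _ => ⟨fun k hk _ => ?_, fun k hk _ => ?_⟩)
    (Nat.zero_le _) <;>
  rcases hb.trichotomy hk hm with ⟨_, _⟩ | rfl | ⟨_, _, _⟩ <;> omega

end Runs

lemma reaches_of_turnsDownAt (hb : IsSnailSeq b) {m : ℕ} (hm : 1 ≤ m) (h : TurnsDownAt b m p) :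
    Reaches b p (b m + 1, 0) := by
  obtain ⟨c, y⟩ := p
  induction y using Nat.strong_induction_on generalizing c with
  | _ y ih =>
  have hbm := hb.pos m hm
  have hdown : Reaches b (c, y) (c, y - 1) := .of_nextFn (nextFn_of_turnsDownAt hb hm h)
  rcases h with ⟨rfl, hy, hym⟩ | ⟨rfl, hy, hy₀, hym⟩
  · rcases Nat.eq_zero_or_pos (y - 1) with hy₁ | hy₁
    · rwa [hy₁] at hdown
    · have hrun : Reaches b (b m + 1, y - 1) (2 * b m, y - 1) :=
        ⟨b m - 1, by rw [iterate_nextFn_inner_even hb hm (by omega) (by omega)]; congr 1; omega⟩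
      exact hdown.trans
        (hrun.trans (ih (y - 1) (by omega) _ (.inr ⟨rfl, by omega, hy₁, by omega⟩)))
  · have hrun : Reaches b (2 * b m, y - 1) (b m + 1, y - 1) :=
      ⟨b m - 1, by rw [iterate_nextFn_inner_odd hb hm (by omega) (by omega)]; congr 1; omega⟩
    exact hdown.trans (hrun.trans (ih (y - 1) (by omega) _ (.inl ⟨rfl, by omega, by omega⟩)))

lemma reaches_succ (hb : IsSnailSeq b) {m : ℕ} (hm : 1 ≤ m) :
    Reaches b (b m + 1, 0) (b (m + 1) + 1, 0) := by
  have hgap := hb.gap m hm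
  have hup : ∀ {c y : ℕ}, TurnsUp b (c, y) → Reaches b (c, y) (c, y + 1) :=
    fun h => .of_nextFn (nextFn_of_turnsUp h)
  have zigzag : ∀ r ≤ m, Reaches b (b (m + 1), 0) (b (m + 1), 2 * r) := by
    intro r hr
    induction r with
    | zero => exact .refl b _
    | succ r ih =>
      calc Reaches b (b (m + 1), 0) (b (m + 1), 2 * r) := ih (by omega)
        Reaches b _ (b (m + 1), 2 * r + 1) := hup (.inl ⟨m + 1, by omega, rfl, by omega, by omega⟩)
        Reaches b _ (2 * b m + 1, 2 * r + 1) := reaches_outer_odd hb hm (by omega)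
        Reaches b _ (2 * b m + 1, 2 * r + 1 + 1) :=
          hup (.inr (.inl ⟨m, hm, rfl, by omega, by omega, by omega⟩))
        Reaches b _ (b (m + 1), 2 * (r + 1)) := reaches_outer_even hb hm (by omega)
  calc Reaches b (b m + 1, 0) (b (m + 1), 0) := reaches_row_zero hb hm (by omega) (by omega) le_rfl
    Reaches b _ (b (m + 1), 2 * m) := zigzag m le_rfl
    Reaches b _ (b (m + 1), 2 * m + 1) := hup (.inl ⟨m + 1, by omega, rfl, by omega, by omega⟩)
    Reaches b _ (0, 2 * m + 1) := reaches_top_odd hb hm (by omega) (by omega)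
    Reaches b _ (0, 2 * m + 1 + 1) := hup (.inr (.inr ⟨rfl, by omega⟩))
    Reaches b _ (2 * b (m + 1), 2 * m + 1 + 1) :=
      ⟨2 * b (m + 1), by
        rw [iterate_nextFn_top_even hb (m := m + 1) (c₀ := 0) (y := 2 * m + 1 + 1) (by omega)
          (by omega) (by omega) (by omega), zero_add]⟩
    Reaches b _ (b (m + 1) + 1, 0) :=
      reaches_of_turnsDownAt hb (by omega) (.inr ⟨rfl, by omega, by omega, by omega⟩)

lemma reaches_of_le (hb : IsSnailSeq b) {m k : ℕ} (hm : 1 ≤ m) (h : m ≤ k) :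
    Reaches b (b m + 1, 0) (b k + 1, 0) := by
  induction k, h using Nat.le_induction with
  | base => exact .refl b _
  | succ k hk ih => exact ih.trans (reaches_succ hb (hm.trans hk))

lemma exists_iterate_eq_of_turnsDownAt (hb : IsSnailSeq b) {m : ℕ} (hm : 1 ≤ m)
    (h : TurnsDownAt b m p) :
    ∃ q, (nextFn b)^[b m] q = p ∧ ∀ s, 0 < s → s < b m → ¬ TurnsDown b ((nextFn b)^[s] q) := by
  have hbm := hb.pos m hm
  obtain ⟨c, y⟩ := p
  rcases h with ⟨rfl, hy, hym⟩ | ⟨rfl, hy, hy₀, hym⟩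
  · have hstep : nextFn b (2 * b m, y + 1) = (2 * b m, y) :=
      nextFn_of_turnsDownAt hb hm (.inr ⟨rfl, by omega, by omega, by omega⟩)
    have hq : ∀ s < b m, (nextFn b)^[s + 1] (2 * b m, y + 1) = (2 * b m - s, y) := fun s hs => by
      rw [Function.iterate_succ_apply, hstep, iterate_nextFn_inner_odd hb hm hy hs]
    refine ⟨_, by rw [← Nat.sub_add_cancel hbm, hq _ (by omega)]; congr 1; omega,
      fun s hs hs' => ?_⟩
    rw [← Nat.sub_add_cancel hs, hq _ (by omega)]
    rintro ⟨k, hk, ⟨_, _, _⟩ | ⟨_, _, _, _⟩⟩ <;>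
      rcases hb.trichotomy hk hm with ⟨_, _⟩ | rfl | ⟨_, _, _⟩ <;> omega
  rcases Nat.lt_or_ge y (2 * m) with hym' | hym'
  · have hstep : nextFn b (b m + 1, y + 1) = (b m + 1, y) :=
      nextFn_of_turnsDownAt hb hm (.inl ⟨rfl, by omega, by omega⟩)
    have hq : ∀ s < b m, (nextFn b)^[s + 1] (b m + 1, y + 1) = (b m + 1 + s, y) := fun s hs => by
      rw [Function.iterate_succ_apply, hstep, iterate_nextFn_inner_even hb hm hy hs]
    refine ⟨_, by rw [← Nat.sub_add_cancel hbm, hq _ (by omega)]; congr 1; omega,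
      fun s hs hs' => ?_⟩
    rw [← Nat.sub_add_cancel hs, hq _ (by omega)]
    rintro ⟨k, hk, ⟨_, _, _⟩ | ⟨_, _, _, _⟩⟩ <;>
      rcases hb.trichotomy hk hm with ⟨_, _⟩ | rfl | ⟨_, _, _⟩ <;> omega
  · have hq : ∀ s ≤ b m, (nextFn b)^[s] (b m, y) = (b m + s, y) := fun s hs =>
      iterate_nextFn_top_even hb hm hy hym' (by omega)
    refine ⟨_, by rw [hq _ le_rfl]; congr 1; omega, fun s hs hs' => ?_⟩
    rw [hq _ hs'.le]
    rintro ⟨k, hk, ⟨_, _, _⟩ | ⟨_, _, _, _⟩⟩ <;>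
      rcases hb.trichotomy hk hm with ⟨_, _⟩ | rfl | ⟨_, _, _⟩ <;> omega

lemma enum_add (b : ℕ → ℕ) (i j : ℕ) : enum b (i + j) = (nextFn b)^[i] (enum b j) :=
  Function.iterate_add_apply _ i j _

lemma enum_bijective {pos : ℕ × ℕ → ℕ} (hpos : ∀ p k, pos p = k ↔ (nextFn b)^[k] (0, 0) = p) :
    Function.Bijective (enum b) :=
  ⟨fun k k' h => ((hpos _ k).2 h).symm.trans ((hpos _ k').2 rfl),
    fun p => ⟨pos p, (hpos p _).1 rfl⟩⟩

lemma le_of_reaches_enum (he : Function.Injective (enum b)) {t t' : ℕ}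
    (h : Reaches b (enum b t) (enum b t')) : t ≤ t' := by
  obtain ⟨k, hk⟩ := h
  rw [← enum_add] at hk
  exact (he hk).le.trans' le_add_self

lemma not_turnsDown_of_turnsDown (hb : IsSnailSeq b) (he : Function.Bijective (enum b))
    {n c P t₁ t₂ : ℕ} (hP : enum b P = (c, 0)) (hc : 1 ≤ n → b n < c) (hc' : c ≤ b (n + 1))
    (hPb : P ≤ b (n + 1)) (ht₁ : P ≤ t₁) (ht : t₁ < t₂) (ht' : t₂ < t₁ + P)
    (hd : TurnsDown b (enum b t₂)) : ¬ TurnsDown b (enum b t₁) := by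
  obtain ⟨m, hm, hdm⟩ := hd
  rcases le_or_gt m n with hmn | hmn
  · have hreach := (reaches_of_turnsDownAt hb hm hdm).trans
      ((reaches_of_le hb hm hmn).trans (reaches_row_zero hb (hm.trans hmn) (by omega)
        (hc (hm.trans hmn)) hc'))
    rw [← hP] at hreach
    have := le_of_reaches_enum he.1 hreach
    omega
  · obtain ⟨q, hq, hwin⟩ := exists_iterate_eq_of_turnsDownAt hb hm hdm
    obtain ⟨u, rfl⟩ := he.2 q
    have hu : b m + u = t₂ := he.1 (by rw [enum_add, hq])
    have := hb.apply_le_apply (by omega : 1 ≤ n + 1) hmn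
    have := hwin (t₁ - u) (by omega) (by omega)
    rwa [← enum_add, Nat.sub_add_cancel (by omega)] at this

lemma snd_enum_le_snd_enum_add_add_one (hb : IsSnailSeq b) (he : Function.Bijective (enum b))
    {n c P i j : ℕ} (hP : enum b P = (c, 0)) (hc : 1 ≤ n → b n < c) (hc' : c ≤ b (n + 1))
    (hPb : P ≤ b (n + 1)) (hj : P ≤ j) (hi : i ≤ P) :
    (enum b j).2 ≤ (enum b (i + j)).2 + 1 := by
  rw [enum_add]
  refine le_iterate_add_one (g := Prod.snd) (D := TurnsDown b) (fun _ => snd_le_snd_nextFn)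
    (snd_le_snd_nextFn_add_one b) i _ fun s t hst ht hdt => ?_
  rw [← enum_add] at hdt ⊢
  exact not_turnsDown_of_turnsDown hb he hP hc hc' hPb (by omega) (by omega) (by omega) hdt

lemma fst_enum_add_le (b : ℕ → ℕ) (i j : ℕ) : (enum b (i + j)).1 ≤ (enum b j).1 + i := by
  rw [enum_add]
  exact le_iterate_add_of_le_add_one (fst_nextFn_le b) i _

end Snail

open Snail in
theorem snail_estimate_general
    (A : ℕ → ℕ → ℝ) (b : ℕ → ℕ) (pos : ℕ × ℕ → ℕ) (a s Δ : ℕ → ℕ)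
    (hA1 : ∀ N j, 1 ≤ A N j)
    (hA2m : ∀ j, Monotone fun N => A N j)
    (hA3m : ∀ N, Monotone fun j => A N j)
    (hA4 : ∀ N j, A N (j + 1) ≤ 2 * A N j)
    (hbpos : ∀ n, 1 ≤ n → 0 < b n)
    (hbgap : ∀ n, 1 ≤ n → 2 * b n + 1 < b (n + 1))
    (hpos : ∀ p k, pos p = k ↔ (nextFn b)^[k] (0, 0) = p)
    (hord : ∀ n, 1 ≤ n → Δ n < b n ∧ 2 * b n < s n ∧ s n < a n ∧ a n < Δ (n + 1))
    (hbΔ : ∀ n, 1 ≤ n → 2 * pos (Δ n, 0) ≤ b n)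
    :
    ∀ n j i N : ℕ, pos (Δ (n + 1), 0) ≤ j → 1 ≤ i → i ≤ pos (Δ (n + 1), 0) →
      normK A N ⇑(eVec b (i + j)) ≤ 2 ^ i * normK A (N + 1) ⇑(eVec b j) := by
  intro n j i N hj _ hi
  have hb : IsSnailSeq b := ⟨hbpos, hbgap⟩
  have hP : enum b (pos (Δ (n + 1), 0)) = (Δ (n + 1), 0) := (hpos _ _).1 rfl
  have hrow := snd_enum_le_snd_enum_add_add_one hb (enum_bijective hpos) hP
    (fun hn => by have := hord n hn; omega) (hord (n + 1) n.succ_pos).1.le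
    (by have := hbΔ (n + 1) n.succ_pos; omega) hj hi
  exact normK_single_le_two_pow_mul (fun j => zero_le_one.trans (hA1 _ j))
    (fun j => hA2m j N.le_succ) (hA3m N) (hA4 N) (fst_enum_add_le b i j) hrow

/-- If `j ≥ pos(Δ_{n+1},0)` and `1 ≤ i ≤ pos(Δ_{n+1},0)`, then `‖e_{i+j}‖_N ≤ 2ⁱ ‖e_j‖_{N+1}`. -/
theorem snail_estimate
    (A : ℕ → ℕ → ℝ) (b : ℕ → ℕ) (pos : ℕ × ℕ → ℕ) (a s Δ : ℕ → ℕ)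
    (hA1 : ∀ N j, 1 ≤ A N j)
    (hA2m : ∀ j, Monotone fun N => A N j)
    (hA2u : ∀ j, ¬ BddAbove (Set.range fun N => A N j))
    (hA3m : ∀ N, Monotone fun j => A N j)
    (hA3u : ∀ N, ¬ BddAbove (Set.range fun j => A N j))
    (hA4 : ∀ N j, A N (j + 1) ≤ 2 * A N j)
    (hA5 : ∀ N, Filter.Tendsto (fun j => A N j / A (N + 1) j) Filter.atTop (nhds 0))
    (hA6 : ∀ N, Filter.Tendsto (fun j => (2 : ℝ) ^ j / A N j) Filter.atTop Filter.atTop)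
    (hbpos : ∀ n, 1 ≤ n → 0 < b n)
    (hbmono : ∀ n, 1 ≤ n → b n < b (n + 1))
    (hbgap : ∀ n, 1 ≤ n → 2 * b n + 1 < b (n + 1))
    (hpos : ∀ p k, pos p = k ↔ (nextFn b)^[k] (0, 0) = p)
    (hΔ0 : Δ 0 = 1)
    (hΔ : ∀ n, Δ (n + 1) = a n + pos (Δ n, 0))
    (hord0 : Δ 0 < a 0 ∧ a 0 < Δ 1)
    (hord : ∀ n, 1 ≤ n → Δ n < b n ∧ 2 * b n < s n ∧ s n < a n ∧ a n < Δ (n + 1))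
    (hbΔ : ∀ n, 1 ≤ n → 2 * pos (Δ n, 0) ≤ b n)
    :
    ∀ n j i N : ℕ, pos (Δ (n + 1), 0) ≤ j → 1 ≤ i → i ≤ pos (Δ (n + 1), 0) →
      normK A N ⇑(eVec b (i + j)) ≤ 2 ^ i * normK A (N + 1) ⇑(eVec b j) :=
  snail_estimate_general A b pos a s Δ hA1 hA2m hA3m hA4 hbpos hbgap hpos hord hbΔ
end
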